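/- arXiv:2509.09600 — 7 statements merged into one kernel-verified Lean document; each statement's English description precedes it below -/
import Mathlib

section
/- Let B : X → X' be a bounded linear operator that is positive, i.e. ⟨Bv, v⟩ ≥ 0 for all v ∈ X. Let δ, z ∈ X with ‖z‖ = 1, and let β > 0 satisfy ⟨Bδ, δ⟩ ≤ β². Then |⟨Bδ, z⟩| ≤ β(1 + ⟨Bz, z⟩) + |⟨Bz, δ⟩|. -/
open Filter Topology

lemma aux_statement3 (β a s c : ℝ) (hβ : 0 < β) (ha : 0 ≤ a) (hc : 0 ≤ c)
    (hcb : c ≤ β ^ 2) (hd : s ^ 2 - 4 * a * c ≤ 0) : |s| ≤ β * (1 + a) := by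
  have h4 : s ^ 2 ≤ 4 * a * β ^ 2 := by nlinarith
  have hsq : s ^ 2 ≤ (β * (1 + a)) ^ 2 := by nlinarith [sq_nonneg (β * (1 - a))]
  exact abs_le_of_sq_le_sq hsq (by positivity)

/-- Key inequality from the proof of Proposition 2.4 (prop:convergence1):
for a positive bounded linear operator `B : X → X'`, a unit vector `z`, and
`β > 0` with `⟨Bδ, δ⟩ ≤ β²`, one has
`|⟨Bδ, z⟩| ≤ β(1 + ⟨Bz, z⟩) + |⟨Bz, δ⟩|`. -/
theorem statement3
    {X : Type*} [NormedAddCommGroup X] [InnerProductSpace ℝ X]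
    (B : X →L[ℝ] X →L[ℝ] ℝ)
    (hpos : ∀ v : X, 0 ≤ B v v)
    (δ z : X) (hz : ‖z‖ = 1)
    (β : ℝ) (hβ : 0 < β) (hδ : B δ δ ≤ β ^ 2) :
    |B δ z| ≤ β * (1 + B z z) + |B z δ| := by
  have hq : ∀ t : ℝ, 0 ≤ B z z * (t * t) + (B δ z + B z δ) * t + B δ δ := by
    intro t
    have h := hpos (δ + t • z)
    simp only [map_add, map_smul, ContinuousLinearMap.add_apply,
      ContinuousLinearMap.smul_apply, smul_eq_mul] at h
    nlinarith [h]
  have hd : discrim (B z z) (B δ z + B z δ) (B δ δ) ≤ 0 := discrim_le_zero hq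
  rw [discrim] at hd
  have hsb : |B δ z + B z δ| ≤ β * (1 + B z z) :=
    aux_statement3 β (B z z) (B δ z + B z δ) (B δ δ) hβ (hpos z) (hpos δ) hδ hd
  have h1 : |B δ z| ≤ |B δ z + B z δ| + |B z δ| := by
    calc |B δ z| = |(B δ z + B z δ) - B z δ| := by ring_nf
    _ ≤ |B δ z + B z δ| + |B z δ| := abs_sub _ _
  linarith
end

section
/- Let {uⁿ} be the sequence generated by the iteration ⟨A[uⁿ](uⁿ⁺¹ − uⁿ), v⟩ = −⟨E'(uⁿ), v⟩ for all v ∈ X, starting from u⁰ ∈ X (i.e. uⁿ⁺¹ = T(uⁿ)). Assume properties (A1)–(A3) and (T) hold, that there exists μ ∈ ℝ with E(uⁿ) ≥ μ for all n ≥ 0, and that sup_{n ≥ 0} ‖A[uⁿ]z‖_{X'} < ∞ for every z ∈ X. Then the sequence {E(uⁿ)} is monotone decreasing, hence has a limit E⋆, and ‖E'(uⁿ)‖_{X'} → 0 as n → ∞. -/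
open Filter Topology
open scoped RealInnerProductSpace

/-!
By (T) the energy drops by at least `γ ⟨A[uⁿ]dⁿ, dⁿ⟩` at each step, `dⁿ = uⁿ⁺¹ - uⁿ`, so the
energies decrease to a limit and `⟨A[uⁿ]dⁿ, dⁿ⟩ → 0`. Since `E'(uⁿ) = -A[uⁿ]dⁿ`, for a unit
vector `v` we split `⟨A[uⁿ]dⁿ, v⟩` into its symmetric part, at most
`2 √(⟨A[uⁿ]dⁿ, dⁿ⟩ ⟨A[uⁿ]v, v⟩)` by Cauchy–Schwarz for the positive form `A[uⁿ]`, and the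
transposed part `⟨A[uⁿ]v, dⁿ⟩`, which (A3) sends to `0` uniformly in `v`. Banach–Steinhaus bounds
`⟨A[uⁿ]v, v⟩` uniformly; it needs `X` complete, and this follows from `A[u⁰]` being a positive
bijection onto `X'`: if `x_k` is Cauchy, `A[u⁰]x_k → A[u⁰]x` for some `x`, and positivity plus
surjectivity make `x_k - x` tend weakly, hence strongly, to `0`.
-/

section PositiveBilinear

variable {M : Type*} [AddCommGroup M] [Module ℝ M] {B : M →ₗ[ℝ] M →ₗ[ℝ] ℝ}

theorem abs_apply_add_apply_swap_le (hB : ∀ v, 0 ≤ B v v) (x y : M) :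
    |B x y + B y x| ≤ 2 * √(B x x * B y y) := by
  have hquad : ∀ t : ℝ, 0 ≤ B y y * (t * t) + (B x y + B y x) * t + B x x := fun t => by
    have := hB (x + t • y)
    simp only [map_add, map_smul, LinearMap.add_apply, LinearMap.smul_apply, smul_eq_mul] at this
    linarith
  have hdisc := discrim_le_zero hquad
  rw [discrim] at hdisc
  calc |B x y + B y x| ≤ √(4 * (B x x * B y y)) := Real.abs_le_sqrt (by linarith)
    _ = 2 * √(B x x * B y y) := by
      rw [Real.sqrt_mul (by norm_num), show (4 : ℝ) = 2 ^ 2 by norm_num, Real.sqrt_sq (by norm_num)]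

theorem tendsto_apply_swap_of_tendsto_apply_self (hB : ∀ v, 0 ≤ B v v) {ι : Type*} {l : Filter ι}
    {y : ι → M} (w : M) (hdiag : Tendsto (fun k => B (y k) (y k)) l (𝓝 0))
    (hyw : Tendsto (fun k => B (y k) w) l (𝓝 0)) :
    Tendsto (fun k => B w (y k)) l (𝓝 0) := by
  have hsym : Tendsto (fun k => B (y k) w + B w (y k)) l (𝓝 0) := by
    refine squeeze_zero_norm (fun k => abs_apply_add_apply_swap_le hB (y k) w) ?_
    simpa using ((hdiag.mul_const (B w w)).sqrt).const_mul 2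
  simpa using hsym.sub hyw

end PositiveBilinear

section InnerProductSpace

variable {X : Type*} [NormedAddCommGroup X] [InnerProductSpace ℝ X]

theorem tendsto_zero_of_cauchySeq_of_inner_tendsto_zero {x : ℕ → X} (hx : CauchySeq x)
    (hweak : ∀ y, Tendsto (fun k => ⟪y, x k⟫) atTop (𝓝 0)) : Tendsto x atTop (𝓝 0) := by
  obtain ⟨R, hR⟩ := hx.isBounded_range.exists_norm_le
  have hR' : ∀ k, ‖x k‖ ≤ R := fun k => hR _ (Set.mem_range_self k)
  have hR0 : 0 ≤ R := (norm_nonneg _).trans (hR' 0)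
  suffices hsq : Tendsto (fun k => ‖x k‖ ^ 2) atTop (𝓝 0) by
    simpa [tendsto_zero_iff_norm_tendsto_zero] using hsq.sqrt
  refine Metric.tendsto_nhds.2 fun ε hε => ?_
  obtain ⟨N, hN⟩ := Metric.cauchySeq_iff'.1 hx (ε / (2 * (R + 1))) (by positivity)
  filter_upwards [eventually_ge_atTop N, (hweak (x N)).eventually (gt_mem_nhds (half_pos hε))]
    with k hkN hk
  have hfar : ⟪x k - x N, x k⟫ < ε / 2 :=
    calc ⟪x k - x N, x k⟫ ≤ ‖x k - x N‖ * ‖x k‖ := real_inner_le_norm _ _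
      _ ≤ ε / (2 * (R + 1)) * R := by
        gcongr
        exacts [(dist_eq_norm (x k) (x N) ▸ hN k hkN).le, hR' k]
      _ < ε / 2 := by
        rw [div_mul_eq_mul_div, div_lt_div_iff₀ (by positivity) two_pos]
        nlinarith
  have hsplit : ‖x k‖ ^ 2 = ⟪x k - x N, x k⟫ + ⟪x N, x k⟫ := by
    rw [inner_sub_left, real_inner_self_eq_norm_sq]; ring
  rw [Real.dist_eq, sub_zero, abs_of_nonneg (by positivity)]
  linarith

theorem completeSpace_of_surjective_of_nonneg {B : X →L[ℝ] X →L[ℝ] ℝ}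
    (hsurj : Function.Surjective B) (hB : ∀ v, 0 ≤ B v v) : CompleteSpace X := by
  refine Metric.complete_of_cauchySeq_tendsto fun x hx => ?_
  obtain ⟨f, hf⟩ := cauchySeq_tendsto_of_complete (B.uniformContinuous.comp_cauchySeq hx)
  obtain ⟨l, rfl⟩ := hsurj f
  refine ⟨l, tendsto_sub_nhds_zero_iff.1 ?_⟩
  set y := fun k => x k - l
  have hy : CauchySeq y := by
    simpa [y, sub_eq_add_neg, Pi.add_def] using hx.add (cauchySeq_const (-l))
  have hBy : Tendsto (fun k => B (y k)) atTop (𝓝 0) := by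
    simpa [y] using hf.sub_const (B l)
  obtain ⟨R, hR⟩ := hy.isBounded_range.exists_norm_le
  have hdiag : Tendsto (fun k => B (y k) (y k)) atTop (𝓝 0) := by
    refine squeeze_zero_norm (a := fun k => ‖B (y k)‖ * R) (fun k => ?_)
      (by simpa using hBy.norm.mul_const R)
    exact ((B (y k)).le_opNorm _).trans
      (mul_le_mul_of_nonneg_left (hR _ (Set.mem_range_self k)) (norm_nonneg _))
  refine tendsto_zero_of_cauchySeq_of_inner_tendsto_zero hy fun z => ?_
  obtain ⟨w, hw⟩ := hsurj (innerSL ℝ z)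
  have hyw : Tendsto (fun k => B (y k) w) atTop (𝓝 0) := by
    simpa [Function.comp_def] using
      ((ContinuousLinearMap.apply ℝ ℝ w).continuous.tendsto 0).comp hBy
  simpa [hw] using tendsto_apply_swap_of_tendsto_apply_self (B := B.toLinearMap₁₂) hB w hdiag hyw

end InnerProductSpace

theorem norm_apply_le_abs_iSup_add_of_nonneg {X : Type*} [NormedAddCommGroup X] [NormedSpace ℝ X]
    {B : X →L[ℝ] X →L[ℝ] ℝ} (hB : ∀ v, 0 ≤ B v v) {C : ℝ} (hC : ‖B‖ ≤ C) (d : X) :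
    ‖B d‖ ≤ |⨆ z : {z : X // ‖z‖ = 1}, B z d| + 2 * √(B d d * C) := by
  refine ContinuousLinearMap.opNorm_le_of_unit_norm (by positivity) fun v hv => ?_
  have hbound : ∀ z : X, ‖z‖ = 1 → ∀ y, |B z y| ≤ ‖B‖ * ‖y‖ := fun z hz y => by
    simpa [hz] using B.le_opNorm₂ z y
  have hbdd : BddAbove (Set.range fun z : {z : X // ‖z‖ = 1} => B z d) :=
    ⟨‖B‖ * ‖d‖, by rintro _ ⟨z, rfl⟩; exact (le_abs_self _).trans (hbound z z.2 d)⟩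
  have hswap : |B v d| ≤ |⨆ z : {z : X // ‖z‖ = 1}, B z d| := by
    have h₁ := le_ciSup hbdd ⟨v, hv⟩
    have h₂ := le_ciSup hbdd ⟨-v, by rwa [norm_neg]⟩
    simp only [map_neg, neg_apply] at h₁ h₂
    exact abs_le.2 ⟨by linarith [le_abs_self (⨆ z : {z : X // ‖z‖ = 1}, B z d)],
      h₁.trans (le_abs_self _)⟩
  have hvv : B v v ≤ C := (le_abs_self _).trans ((hbound v hv v).trans (by simpa [hv] using hC))
  have hcs : |B d v + B v d| ≤ 2 * √(B d d * B v v) :=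
    abs_apply_add_apply_swap_le (B := B.toLinearMap₁₂) hB d v
  have hsym : |B d v + B v d| ≤ 2 * √(B d d * C) := hcs.trans (by gcongr; exact hB d)
  calc ‖B d v‖ = |(B d v + B v d) - B v d| := by rw [Real.norm_eq_abs]; ring_nf
    _ ≤ |B d v + B v d| + |B v d| := abs_sub _ _
    _ ≤ _ := by linarith

theorem tendsto_zero_of_add_mul_le {e a : ℕ → ℝ} {γ L : ℝ} (hγ : 0 < γ) (ha : ∀ n, 0 ≤ a n)
    (hstep : ∀ n, e (n + 1) + γ * a n ≤ e n) (he : Tendsto e atTop (𝓝 L)) :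
    Tendsto a atTop (𝓝 0) := by
  refine squeeze_zero (g := fun n => (e n - e (n + 1)) / γ) ha
    (fun n => (le_div_iff₀ hγ).2 (by linarith [hstep n])) ?_
  simpa using (he.sub (he.comp (tendsto_add_atTop_nat 1))).div_const γ

/-- Proposition 2.4 (prop:convergence1): under (A1)–(A3) and (T), if the
energies of the iterates are bounded below and the Banach–Steinhaus condition
holds, then the energies decrease monotonically to a limit and the dual norms
of the residuals `E'(uⁿ)` vanish. -/
theorem statement4
    {X : Type*} [NormedAddCommGroup X] [InnerProductSpace ℝ X]
    (E : X → ℝ) (E' : X → X →L[ℝ] ℝ)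
    (A : X → X →L[ℝ] X →L[ℝ] ℝ) (T : X → X) (u : ℕ → X)
    -- (A1) invertibility on the sublevel set M(u⁰)
    (hA1 : ∀ w : X, E w ≤ E (u 0) → Function.Bijective (A w))
    -- (A2) positivity on M(u⁰)
    (hA2 : ∀ w : X, E w ≤ E (u 0) → ∀ v : X, v ≠ 0 → 0 < A w v v)
    -- (A3) weak definiteness on M(u⁰)
    (hA3 : ∀ v : ℕ → X, (∀ n, E (v n) ≤ E (u 0)) →
      Tendsto (fun n => A (v n) (v (n+1) - v n) (v (n+1) - v n)) atTop (𝓝 0) →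
      Tendsto (fun n => ⨆ z : {z : X // ‖z‖ = 1}, A (v n) (z : X) (v (n+1) - v n))
        atTop (𝓝 0))
    -- the update operator T is defined by ⟨A[w](T w − w), v⟩ = −⟨E'(w), v⟩
    (hTdef : ∀ w : X, E w ≤ E (u 0) → ∀ v : X, A w (T w - w) v = -(E' w v))
    -- property (T)
    (γ : ℝ) (hγ : 0 < γ)
    (hT : ∀ w : X, E w ≤ E (u 0) → E w - E (T w) ≥ γ * A w (T w - w) (T w - w))
    -- the iteration uⁿ⁺¹ = T(uⁿ)
    (hiter : ∀ n, u (n + 1) = T (u n))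
    -- the energies are bounded from below
    (μ : ℝ) (hμ : ∀ n, μ ≤ E (u n))
    -- sup_{n} ‖A[uⁿ]z‖_{X'} < ∞ for every z ∈ X
    (hBS : ∀ z : X, ∃ C : ℝ, ∀ n, ‖A (u n) z‖ ≤ C) :
    (∀ m n, m ≤ n → E (u n) ≤ E (u m)) ∧
    (∃ Estar : ℝ, Tendsto (fun n => E (u n)) atTop (𝓝 Estar)) ∧
    Tendsto (fun n => ‖E' (u n)‖) atTop (𝓝 0) := by
  have hnn : ∀ w, E w ≤ E (u 0) → ∀ v, 0 ≤ A w v v := fun w hw v => by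
    rcases eq_or_ne v 0 with rfl | hv
    · simp
    · exact (hA2 w hw v hv).le
  have hstep : ∀ n, E (u n) ≤ E (u 0) →
      E (u (n + 1)) + γ * A (u n) (u (n + 1) - u n) (u (n + 1) - u n) ≤ E (u n) := fun n hn => by
    linarith [hiter n ▸ hT (u n) hn]
  have hsub : ∀ n, E (u n) ≤ E (u 0) := by
    intro n
    induction n with
    | zero => rfl
    | succ n ih => linarith [hstep n ih, mul_nonneg hγ.le (hnn _ ih (u (n + 1) - u n))]
  have hanti : Antitone fun n => E (u n) := antitone_nat_of_succ_le fun n => by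
    linarith [hstep n (hsub n), mul_nonneg hγ.le (hnn _ (hsub n) (u (n + 1) - u n))]
  have hlim := tendsto_atTop_ciInf hanti ⟨μ, by rintro _ ⟨n, rfl⟩; exact hμ n⟩
  have hdiag : Tendsto (fun n => A (u n) (u (n + 1) - u n) (u (n + 1) - u n)) atTop (𝓝 0) :=
    tendsto_zero_of_add_mul_le hγ (fun n => hnn _ (hsub n) _) (fun n => hstep n (hsub n)) hlim
  have : CompleteSpace X :=
    completeSpace_of_surjective_of_nonneg (hA1 (u 0) le_rfl).2 (hnn (u 0) le_rfl)
  obtain ⟨C, hC⟩ := banach_steinhaus hBS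
  have hresidual : ∀ n, ‖E' (u n)‖ = ‖A (u n) (u (n + 1) - u n)‖ := fun n => by
    rw [← norm_neg (A (u n) _)]
    congr 1; ext v; rw [neg_apply, hiter n, hTdef (u n) (hsub n) v, neg_neg]
  refine ⟨fun m n hmn => hanti hmn, ⟨_, hlim⟩, squeeze_zero (fun n => norm_nonneg _)
    (fun n => (hresidual n).trans_le
      (norm_apply_le_abs_iSup_add_of_nonneg (hnn _ (hsub n)) (hC n) _)) ?_⟩
  simpa using (hA3 u hsub hdiag).abs.add (((hdiag.mul_const C).sqrt).const_mul 2)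
end

section
/- Let X_N ⊂ X be a finite-dimensional linear subspace and u⁰_N ∈ X_N. Define for w ∈ M(u⁰_N) the discrete operator A_N[w] : X_N → X_N' by ⟨A_N[w]u, v⟩ = ⟨A[w]u, v⟩ for all u, v ∈ X_N, and the discrete update operator T_N : M(u⁰_N) ∩ X_N → X_N by ⟨A_N[w](T_N(w) − w), v⟩ = −⟨E'(w), v⟩ for all v ∈ X_N. If A satisfies (A1)–(A3) and T satisfies property (T) on X (the latter via the equivalent condition ∫₀¹ ⟨E'(sδ + w) − E'(w), δ⟩ ds ≤ (1 − γ)⟨A[w]δ, δ⟩ for all w and all δ ∈ X), then A_N satisfies (A1)–(A3) on X_N and T_N satisfies property (T) on M(u⁰_N) ∩ X_N with the same constant γ; in particular, T_N is well defined. -/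
open Filter Topology

set_option maxHeartbeats 1000000 in
/-- Lemma 2.5 (lem:solveN): the assumptions (A1)–(A3) and (T) carry over from
`X` to any finite-dimensional subspace `X_N ⊂ X`; in particular the discrete
update operator `T_N`, defined via
`⟨A_N[w](T_N(w) − w), v⟩ = −⟨E'(w), v⟩` for all `v ∈ X_N`, is well defined. -/
theorem statement5
    {X : Type*} [NormedAddCommGroup X] [InnerProductSpace ℝ X]
    (E : X → ℝ) (E' : X → X →L[ℝ] ℝ)
    (A : X → X →L[ℝ] X →L[ℝ] ℝ)
    -- smoothness of E: fundamental theorem of calculus along segments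
    (hFTC : ∀ w δ : X, E (w + δ) - E w = ∫ s in (0:ℝ)..1, E' (w + s • δ) δ)
    (hInt : ∀ w δ : X, IntervalIntegrable (fun s : ℝ => E' (w + s • δ) δ)
      MeasureTheory.volume 0 1)
    (XN : Submodule ℝ X) [FiniteDimensional ℝ XN]
    (u0N : X) (hu0N : u0N ∈ XN)
    -- (A1) on X, over the sublevel set M(u⁰_N)
    (hA1 : ∀ w : X, E w ≤ E u0N → Function.Bijective (A w))
    -- (A2) on X
    (hA2 : ∀ w : X, E w ≤ E u0N → ∀ v : X, v ≠ 0 → 0 < A w v v)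
    -- (A3) on X
    (hA3 : ∀ v : ℕ → X, (∀ n, E (v n) ≤ E u0N) →
      Tendsto (fun n => A (v n) (v (n+1) - v n) (v (n+1) - v n)) atTop (𝓝 0) →
      Tendsto (fun n => ⨆ z : {z : X // ‖z‖ = 1}, A (v n) (z : X) (v (n+1) - v n))
        atTop (𝓝 0))
    -- property (T) on X via the equivalent integral condition, for all w and δ
    (γ : ℝ) (hγ : 0 < γ)
    (hTint : ∀ w δ : X,
      (∫ s in (0:ℝ)..1, (E' (w + s • δ) δ - E' w δ)) ≤ (1 - γ) * A w δ δ) :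
    -- (A1) on X_N: the discrete operator A_N[w] is bijective
    (∀ w : X, E w ≤ E u0N →
      Function.Bijective (fun uN : XN => (A w (uN : X)).comp XN.subtypeL)) ∧
    -- (A2) on X_N
    (∀ w : X, E w ≤ E u0N → ∀ v : XN, v ≠ 0 → 0 < A w (v : X) (v : X)) ∧
    -- (A3) on X_N, for sequences in M(u⁰_N) ∩ X_N
    (∀ v : ℕ → X, (∀ n, v n ∈ XN ∧ E (v n) ≤ E u0N) →
      Tendsto (fun n => A (v n) (v (n+1) - v n) (v (n+1) - v n)) atTop (𝓝 0) →
      Tendsto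
        (fun n => ⨆ z : {z : XN // ‖z‖ = 1}, A (v n) ((z : XN) : X) (v (n+1) - v n))
        atTop (𝓝 0)) ∧
    -- T_N is well defined on M(u⁰_N) ∩ X_N and satisfies property (T) with the same γ
    (∀ w : X, w ∈ XN → E w ≤ E u0N →
      (∃! uN : XN, ∀ v ∈ XN, A w ((uN : X) - w) v = -(E' w v)) ∧
      (∀ uN : XN, (∀ v ∈ XN, A w ((uN : X) - w) v = -(E' w v)) →
        E w - E (uN : X) ≥ γ * A w ((uN : X) - w) ((uN : X) - w))) := by
  -- the discrete operator as a linear map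
  have hL : ∀ w : X, E w ≤ E u0N →
      Function.Bijective (fun uN : XN => (A w (uN : X)).comp XN.subtypeL) := by
    intro w hw
    set L : XN →ₗ[ℝ] (XN →L[ℝ] ℝ) :=
      { toFun := fun uN => (A w (uN : X)).comp XN.subtypeL
        map_add' := by
          intro u v
          ext z
          simp
        map_smul' := by
          intro c u
          ext z
          simp } with hLdef
    have hinj : Function.Injective L := by
      rw [← LinearMap.ker_eq_bot, LinearMap.ker_eq_bot']
      intro u hu
      by_contra hne
      have h0 : A w (u : X) (u : X) = 0 := by
        have := congrArg (fun f : XN →L[ℝ] ℝ => f u) hu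
        simpa [hLdef] using this
      have hpos := hA2 w hw (u : X) (by simpa using hne)
      rw [h0] at hpos
      exact lt_irrefl 0 hpos
    have hdimdual : Module.finrank ℝ XN = Module.finrank ℝ (XN →L[ℝ] ℝ) := by
      have e1 : (XN →ₗ[ℝ] ℝ) ≃ₗ[ℝ] (XN →L[ℝ] ℝ) := LinearMap.toContinuousLinearMap
      have := LinearEquiv.finrank_eq e1
      rw [← this]
      exact (Subspace.dual_finrank_eq (K := ℝ) (V := XN)).symm
    have : FiniteDimensional ℝ (XN →L[ℝ] ℝ) :=
      Module.Finite.equiv (LinearMap.toContinuousLinearMap :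
        (XN →ₗ[ℝ] ℝ) ≃ₗ[ℝ] (XN →L[ℝ] ℝ))
    have hsurj : Function.Surjective L :=
      (LinearMap.injective_iff_surjective_of_finrank_eq_finrank hdimdual).mp hinj
    exact ⟨hinj, hsurj⟩
  refine ⟨hL, ?_, ?_, ?_⟩
  · -- (A2)
    intro w hw v hv
    exact hA2 w hw (v : X) (by simpa using hv)
  · -- (A3)
    intro v hv htend
    have hgX := hA3 v (fun n => (hv n).2) htend
    by_cases hNE : Nonempty {z : XN // ‖z‖ = 1}
    · have hNEX : Nonempty {z : X // ‖z‖ = 1} := by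
        obtain ⟨z, hz⟩ := hNE
        exact ⟨⟨(z : X), hz⟩⟩
      -- bounded above of X-range
      have hbddX : ∀ n, BddAbove (Set.range
          (fun z : {z : X // ‖z‖ = 1} => A (v n) (z : X) (v (n+1) - v n))) := by
        intro n
        refine ⟨‖A (v n)‖ * ‖v (n+1) - v n‖, ?_⟩
        rintro x ⟨z, rfl⟩
        calc A (v n) (z : X) (v (n+1) - v n) ≤ ‖A (v n) (z : X) (v (n+1) - v n)‖ :=
              le_abs_self _
          _ ≤ ‖A (v n) (z : X)‖ * ‖v (n+1) - v n‖ := (A (v n) (z : X)).le_opNorm _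
          _ ≤ (‖A (v n)‖ * ‖(z : X)‖) * ‖v (n+1) - v n‖ := by
              gcongr
              exact (A (v n)).le_opNorm _
          _ = ‖A (v n)‖ * ‖v (n+1) - v n‖ := by rw [z.2]; ring
      have hbddN : ∀ n, BddAbove (Set.range
          (fun z : {z : XN // ‖z‖ = 1} => A (v n) ((z : XN) : X) (v (n+1) - v n))) := by
        intro n
        refine ⟨‖A (v n)‖ * ‖v (n+1) - v n‖, ?_⟩
        rintro x ⟨z, rfl⟩
        calc A (v n) ((z : XN) : X) (v (n+1) - v n)
              ≤ ‖A (v n) ((z : XN) : X) (v (n+1) - v n)‖ := le_abs_self _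
          _ ≤ ‖A (v n) ((z : XN) : X)‖ * ‖v (n+1) - v n‖ :=
              (A (v n) ((z : XN) : X)).le_opNorm _
          _ ≤ (‖A (v n)‖ * ‖((z : XN) : X)‖) * ‖v (n+1) - v n‖ := by
              gcongr
              exact (A (v n)).le_opNorm _
          _ = ‖A (v n)‖ * ‖v (n+1) - v n‖ := by
              have : ‖((z : XN) : X)‖ = 1 := z.2
              rw [this]; ring
      refine squeeze_zero (fun n => ?_) (fun n => ?_) hgX
      · -- nonnegativity
        obtain ⟨z⟩ := hNE
        have h1 : A (v n) ((z : XN) : X) (v (n+1) - v n) ≤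
            ⨆ z : {z : XN // ‖z‖ = 1}, A (v n) ((z : XN) : X) (v (n+1) - v n) :=
          le_ciSup (hbddN n) z
        have hzneg : ‖(-(z : XN) : XN)‖ = 1 := by
          rw [norm_neg]; exact z.2
        have h2 : A (v n) (((-(z : XN) : XN) : XN) : X) (v (n+1) - v n) ≤
            ⨆ z : {z : XN // ‖z‖ = 1}, A (v n) ((z : XN) : X) (v (n+1) - v n) :=
          le_ciSup (hbddN n) ⟨-(z : XN), hzneg⟩
        have h2' : -(A (v n) ((z : XN) : X) (v (n+1) - v n)) ≤
            ⨆ z : {z : XN // ‖z‖ = 1}, A (v n) ((z : XN) : X) (v (n+1) - v n) := by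
          simpa using h2
        linarith
      · -- comparison with the X-supremum
        refine ciSup_le (fun z => ?_)
        exact le_ciSup (hbddX n) ⟨((z : XN) : X), z.2⟩
    · -- the unit sphere of XN is empty: the supremum is identically 0
      have : (fun n => ⨆ z : {z : XN // ‖z‖ = 1},
          A (v n) ((z : XN) : X) (v (n+1) - v n)) = fun _ => (0 : ℝ) := by
        funext n
        haveI : IsEmpty {z : XN // ‖z‖ = 1} := not_nonempty_iff.mp hNE
        exact Real.iSup_of_isEmpty _
      rw [this]
      exact tendsto_const_nhds
  · -- well-posedness of T_N and property (T)
    intro w hwN hw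
    constructor
    · -- existence and uniqueness
      obtain ⟨δN, hδN⟩ := (hL w hw).2 (-(E' w).comp XN.subtypeL)
      refine ⟨δN + ⟨w, hwN⟩, ?_, ?_⟩
      · intro v hv
        have := congrArg (fun f : XN →L[ℝ] ℝ => f ⟨v, hv⟩) hδN
        simpa using this
      · intro uN huN
        have hkey : ∀ v : XN, A w (((uN - ⟨w, hwN⟩ : XN) : X)) (v : X) = -(E' w v) := by
          intro v
          have := huN (v : X) v.2
          simpa [sub_eq_iff_eq_add] using this
        have hδkey : ∀ v : XN, A w ((δN : X)) (v : X) = -(E' w v) := by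
          intro v
          have := congrArg (fun f : XN →L[ℝ] ℝ => f v) hδN
          simpa using this
        have hdiff : ∀ v : XN,
            A w (((uN - ⟨w, hwN⟩ : XN) : X) - (δN : X)) (v : X) = 0 := by
          intro v
          have := hkey v
          have h2 := hδkey v
          simp only [map_sub, ContinuousLinearMap.sub_apply]
          linarith
        have hzero : (uN - ⟨w, hwN⟩ : XN) - δN = 0 := by
          by_contra hne
          set d : XN := (uN - ⟨w, hwN⟩ : XN) - δN with hd
          have hdX : ((d : XN) : X) = ((uN - ⟨w, hwN⟩ : XN) : X) - (δN : X) := by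
            simp [hd]
          have h0 : A w ((d : XN) : X) ((d : XN) : X) = 0 := by
            rw [hdX]
            exact hdiff d
          have hpos := hA2 w hw ((d : XN) : X) (by simpa using hne)
          rw [h0] at hpos
          exact lt_irrefl 0 hpos
        have : uN - ⟨w, hwN⟩ = δN := by
          have := sub_eq_zero.mp hzero
          exact this
        rw [← this]
        abel
    · -- property (T)
      intro uN huN
      set δ : X := (uN : X) - w with hδ
      have hδmem : δ ∈ XN := XN.sub_mem uN.2 hwN
      have hkeyδ : A w δ δ = -(E' w δ) := huN δ hδmem
      have hFTCδ : E (uN : X) - E w = ∫ s in (0:ℝ)..1, E' (w + s • δ) δ := by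
        have := hFTC w δ
        have heq : w + δ = (uN : X) := by rw [hδ]; abel
        rwa [heq] at this
      have hsplit : (∫ s in (0:ℝ)..1, E' (w + s • δ) δ)
          = (∫ s in (0:ℝ)..1, (E' (w + s • δ) δ - E' w δ)) + E' w δ := by
        rw [intervalIntegral.integral_sub (hInt w δ) intervalIntegrable_const]
        simp
      have hub : E (uN : X) - E w ≤ (1 - γ) * A w δ δ + E' w δ := by
        rw [hFTCδ, hsplit]
        have := hTint w δ
        linarith
      have hE' : E' w δ = -(A w δ δ) := by linarith [hkeyδ]
      rw [hE'] at hub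
      have : E (uN : X) - E w ≤ -γ * A w δ δ := by linarith
      linarith
end

section
/- Let Y be a Banach space and ι : X → Y a compact linear embedding. Suppose the Gâteaux derivative of E has the form E'(v) = L(v) + g(v) for v ∈ X, where L : X → X' is a bounded linear map and g : X → X' satisfies: ⟨g(vⁿ), w⟩ → ⟨g(v⋆), w⟩ for every w ∈ X whenever ‖ι(vⁿ) − ι(v⋆)‖_Y → 0. Then property (E) holds: whenever a sequence {vⁿ} ⊂ X converges weakly to v⋆ ∈ X and satisfies ⟨E'(vⁿ), w⟩ → 0 for every w ∈ X as well as ⟨E'(vⁿ), vⁿ⟩ → 0, it follows that E'(v⋆) = 0 in X'. -/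
open Filter Topology
open scoped RealInnerProductSpace

/-- Lemma 2.9 (lem:compE): compactly perturbed semilinear structure implies
property (E). Here `ι : X → Y` is a compact linear embedding into a Banach
space `Y`, and `E'(v) = L(v) + g(v)` with `L` bounded linear and `g` weakly
continuous in the sense of (2.15). -/
theorem statement9
    {X : Type*} [NormedAddCommGroup X] [InnerProductSpace ℝ X] [CompleteSpace X]
    {Y : Type*} [NormedAddCommGroup Y] [NormedSpace ℝ Y] [CompleteSpace Y]
    (ι : X →L[ℝ] Y) (hinj : Function.Injective ι)
    (hcompact : IsCompactOperator ι)
    (E' : X → X →L[ℝ] ℝ) (L : X →L[ℝ] X →L[ℝ] ℝ) (g : X → X →L[ℝ] ℝ)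
    (hsplit : ∀ v : X, E' v = L v + g v)
    (hg : ∀ (v : ℕ → X) (vstar : X),
      Tendsto (fun n => ‖ι (v n) - ι vstar‖) atTop (𝓝 0) →
      ∀ w : X, Tendsto (fun n => g (v n) w) atTop (𝓝 (g vstar w))) :
    -- property (E)
    ∀ (v : ℕ → X) (vstar : X),
      (∀ w : X, Tendsto (fun n => ⟪v n, w⟫) atTop (𝓝 ⟪vstar, w⟫)) →
      (∀ w : X, Tendsto (fun n => E' (v n) w) atTop (𝓝 0)) →
      Tendsto (fun n => E' (v n) (v n)) atTop (𝓝 0) →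
      E' vstar = 0 := by
  intro v vstar hweak hE' _
  -- Each `w ↦ ⟪z, w⟫` functional view: weak convergence tested against any functional
  have hweak' : ∀ f : X →L[ℝ] ℝ, Tendsto (fun n => f (v n)) atTop (𝓝 (f vstar)) := by
    intro f
    set z := (InnerProductSpace.toDual ℝ X).symm f with hz
    have hfz : ∀ u : X, f u = ⟪z, u⟫ := by
      intro u
      have : InnerProductSpace.toDual ℝ X z = f := by
        rw [hz]; simp
      rw [← this, InnerProductSpace.toDual_apply_apply]
    simp only [hfz]
    simpa only [real_inner_comm] using hweak z
  -- boundedness of the sequence via Banach–Steinhaus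
  obtain ⟨C, hC⟩ : ∃ C, ∀ n, ‖v n‖ ≤ C := by
    have hx : ∀ x : X, ∃ B, ∀ n, ‖(innerSL ℝ (v n) : X →L[ℝ] ℝ) x‖ ≤ B := by
      intro x
      obtain ⟨B, hB⟩ := (hweak x).norm.bddAbove_range
      exact ⟨B, fun n => hB ⟨n, rfl⟩⟩
    obtain ⟨C, hC⟩ := banach_steinhaus hx
    exact ⟨C, fun n => by simpa [innerSL_apply_norm] using hC n⟩
  -- strong convergence of ι (v n) via compactness
  have hstrong : Tendsto (fun n => ι (v n)) atTop (𝓝 (ι vstar)) := by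
    obtain ⟨K, hK, hKsub⟩ :=
      hcompact.image_subset_compact_of_bounded (𝕜₁ := ℝ) (f := (ι : X →ₗ[ℝ] Y))
        (S := Metric.closedBall 0 (max C 0)) Metric.isBounded_closedBall
    have hmemK : ∀ n, ι (v n) ∈ K := fun n =>
      hKsub ⟨v n, by
        simp only [Metric.mem_closedBall, dist_zero_right]
        exact (hC n).trans (le_max_left _ _), rfl⟩
    refine tendsto_of_subseq_tendsto fun ns hns => ?_
    obtain ⟨y, -, φ, hφ, hconv⟩ := hK.isSeqCompact (fun k => hmemK (ns k))
    refine ⟨φ, ?_⟩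
    have hy : y = ι vstar := by
      rw [NormedSpace.eq_iff_forall_dual_eq ℝ]
      intro f
      have h1 : Tendsto (fun k => f (ι (v (ns (φ k))))) atTop (𝓝 (f y)) :=
        (f.continuous.tendsto y).comp hconv
      have h2 : Tendsto (fun k => f (ι (v (ns (φ k))))) atTop (𝓝 (f (ι vstar))) :=
        (hweak' (f.comp ι)).comp (hns.comp hφ.tendsto_atTop)
      exact tendsto_nhds_unique h1 h2
    rw [← hy]; exact hconv
  have hnorm : Tendsto (fun n => ‖ι (v n) - ι vstar‖) atTop (𝓝 0) :=
    tendsto_iff_norm_sub_tendsto_zero.mp hstrong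
  ext w
  have h1 : Tendsto (fun n => E' (v n) w) atTop (𝓝 (E' vstar w)) := by
    have hgw := hg v vstar hnorm w
    have hLw : Tendsto (fun n => L (v n) w) atTop (𝓝 (L vstar w)) := hweak' (L.flip w)
    simpa [hsplit] using hLw.add hgw
  have := tendsto_nhds_unique h1 (hE' w)
  simpa using this
end

section
/- Suppose the Gâteaux derivative E' of E : X → ℝ is strongly monotone with constant η > 0, i.e. ⟨E'(u) − E'(v), u − v⟩ ≥ η‖u − v‖² for all u, v ∈ X. Then for any u⁰ ∈ X, every element w of the sublevel set M(u⁰) = {v ∈ X : E(v) ≤ E(u⁰)} satisfies ‖w‖ ≤ ‖u⁰‖ + (2/η)‖E'(u⁰)‖_{X'}; in particular M(u⁰) is bounded. -/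
open Filter Topology

/-- Remark 2.11 (rem:Mbd): under strong monotonicity of `E'`, every element `w`
of the sublevel set `M(u⁰)` satisfies `‖w‖ ≤ ‖u⁰‖ + (2/η)‖E'(u⁰)‖`; in
particular `M(u⁰)` is bounded. -/
theorem statement14
    {X : Type*} [NormedAddCommGroup X] [InnerProductSpace ℝ X]
    (E : X → ℝ) (E' : X → X →L[ℝ] ℝ)
    -- fundamental theorem of calculus along segments
    (hFTC : ∀ v w : X,
      E v - E w = ∫ s in (0:ℝ)..1, E' (s • v + (1 - s) • w) (v - w))
    (hInt : ∀ v w : X, IntervalIntegrable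
      (fun s : ℝ => E' (s • v + (1 - s) • w) (v - w)) MeasureTheory.volume 0 1)
    -- strong monotonicity of E'
    (η : ℝ) (hη : 0 < η)
    (hmono : ∀ u v : X, η * ‖u - v‖ ^ 2 ≤ (E' u - E' v) (u - v))
    (u0 : X) :
    (∀ w : X, E w ≤ E u0 → ‖w‖ ≤ ‖u0‖ + 2 / η * ‖E' u0‖) ∧
    Bornology.IsBounded {v : X | E v ≤ E u0} := by
  have key : ∀ w : X, E w ≤ E u0 → ‖w‖ ≤ ‖u0‖ + 2 / η * ‖E' u0‖ := by
    intro w hw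
    set d := w - u0 with hd
    have hlow : ∀ s ∈ Set.Icc (0:ℝ) 1,
        η * ‖d‖ ^ 2 * s - ‖E' u0‖ * ‖d‖ ≤ E' (s • w + (1 - s) • u0) (w - u0) := by
      intro s hs
      set x := s • w + (1 - s) • u0 with hxdef
      have hx : x - u0 = s • d := by
        rw [hxdef, hd]; module
      have h1 := hmono x u0
      rw [hx] at h1
      have h2 : η * ‖d‖ ^ 2 * s ≤ (E' x - E' u0) d := by
        rcases eq_or_lt_of_le hs.1 with h0 | h0
        · have hxu : x = u0 := by rw [hxdef, ← h0]; simp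
          rw [hxu, ← h0]
          simp
        · have hmap : (E' x - E' u0) (s • d) = s * (E' x - E' u0) d := by
            simp [map_smul]
          rw [hmap, norm_smul, Real.norm_eq_abs, abs_of_pos h0] at h1
          have : s * (η * ‖d‖ ^ 2 * s) ≤ s * ((E' x - E' u0) d) := by
            nlinarith [h1]
          exact le_of_mul_le_mul_left this h0
      have h3' : |E' u0 d| ≤ ‖E' u0‖ * ‖d‖ := by
        calc |E' u0 d| = ‖E' u0 d‖ := rfl
          _ ≤ ‖E' u0‖ * ‖d‖ := (E' u0).le_opNorm d
      have h3'' : -(‖E' u0‖ * ‖d‖) ≤ E' u0 d := neg_le_of_abs_le h3'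
      have hsplit : E' x (w - u0) = (E' x - E' u0) d + E' u0 d := by
        simp [hd]
      rw [hsplit]
      linarith
    have hg : IntervalIntegrable (fun s : ℝ => η * ‖d‖ ^ 2 * s - ‖E' u0‖ * ‖d‖)
        MeasureTheory.volume 0 1 := by
      apply Continuous.intervalIntegrable; continuity
    have hI := intervalIntegral.integral_mono_on (by norm_num : (0:ℝ) ≤ 1) hg (hInt w u0) hlow
    have hcomp : (∫ s in (0:ℝ)..1, (η * ‖d‖ ^ 2 * s - ‖E' u0‖ * ‖d‖))
        = η * ‖d‖ ^ 2 / 2 - ‖E' u0‖ * ‖d‖ := by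
      rw [intervalIntegral.integral_sub (by apply Continuous.intervalIntegrable; continuity)
        intervalIntegrable_const, intervalIntegral.integral_const_mul]
      simp [integral_id]
      ring
    have hEw : E w - E u0 ≤ 0 := by linarith
    rw [hFTC w u0] at hEw
    rw [hcomp] at hI
    have hineq : η * ‖d‖ ^ 2 / 2 ≤ ‖E' u0‖ * ‖d‖ := by linarith
    have hdle : ‖d‖ ≤ 2 / η * ‖E' u0‖ := by
      rw [div_mul_eq_mul_div, le_div_iff₀ hη]
      rcases eq_or_lt_of_le (norm_nonneg d) with h0 | h0
      · nlinarith [norm_nonneg (E' u0)]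
      · nlinarith [hineq]
    calc ‖w‖ = ‖u0 + d‖ := by rw [hd]; congr 1; abel
      _ ≤ ‖u0‖ + ‖d‖ := norm_add_le _ _
      _ ≤ ‖u0‖ + 2 / η * ‖E' u0‖ := by linarith
  refine ⟨key, ?_⟩
  rw [isBounded_iff_forall_norm_le]
  exact ⟨‖u0‖ + 2 / η * ‖E' u0‖, fun x hx => key x hx⟩
end

section
/- Let H be a real inner product space and ψ : [0, ∞) → ℝ satisfy the monotonicity bounds m_ψ(t − s) ≤ ψ(t²)t − ψ(s²)s ≤ M_ψ(t − s) for all t ≥ s ≥ 0, with constants M_ψ ≥ m_ψ > 0. Then the vector field Φ(a) := ψ(‖a‖²)a on H is strongly monotone: ⟨ψ(‖a‖²)a − ψ(‖b‖²)b, a − b⟩ ≥ m_ψ‖a − b‖² for all a, b ∈ H. -/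
open Filter Topology
open scoped RealInnerProductSpace

/-- Strong monotonicity of the quasilinear vector field `a ↦ ψ(‖a‖²)a` (used in
§3.2): if `ψ` satisfies `m_ψ(t − s) ≤ ψ(t²)t − ψ(s²)s ≤ M_ψ(t − s)` for all
`t ≥ s ≥ 0`, then `⟨ψ(‖a‖²)a − ψ(‖b‖²)b, a − b⟩ ≥ m_ψ‖a − b‖²`. -/
theorem statement18
    {H : Type*} [NormedAddCommGroup H] [InnerProductSpace ℝ H]
    (ψ : ℝ → ℝ) (mψ Mψ : ℝ) (hm : 0 < mψ) (hmM : mψ ≤ Mψ)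
    (hlow : ∀ s t : ℝ, 0 ≤ s → s ≤ t →
      mψ * (t - s) ≤ ψ (t ^ 2) * t - ψ (s ^ 2) * s)
    (hupp : ∀ s t : ℝ, 0 ≤ s → s ≤ t →
      ψ (t ^ 2) * t - ψ (s ^ 2) * s ≤ Mψ * (t - s)) :
    ∀ a b : H,
      mψ * ‖a - b‖ ^ 2 ≤ ⟪ψ (‖a‖ ^ 2) • a - ψ (‖b‖ ^ 2) • b, a - b⟫ := by
  intro a b
  set t := ‖a‖ with ht'
  set s := ‖b‖ with hs'
  have ht : (0:ℝ) ≤ t := norm_nonneg a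
  have hs : (0:ℝ) ≤ s := norm_nonneg b
  have hA : mψ * t ≤ ψ (t ^ 2) * t := by
    have := hlow 0 t le_rfl ht
    simpa using this
  have hB : mψ * s ≤ ψ (s ^ 2) * s := by
    have := hlow 0 s le_rfl hs
    simpa using this
  have hX : mψ * (t - s) ^ 2 ≤ (t - s) * (ψ (t ^ 2) * t - ψ (s ^ 2) * s) := by
    rcases le_total s t with h | h
    · have := hlow s t hs h
      nlinarith
    · have := hlow t s ht h
      nlinarith
  have hc : |⟪a, b⟫| ≤ t * s := abs_real_inner_le_norm a b
  have hc1 : ⟪a, b⟫ ≤ t * s := (abs_le.mp hc).2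
  have hc2 : -(t * s) ≤ ⟪a, b⟫ := (abs_le.mp hc).1
  have hexp : ⟪ψ (t ^ 2) • a - ψ (s ^ 2) • b, a - b⟫
      = ψ (t ^ 2) * t ^ 2 + ψ (s ^ 2) * s ^ 2
        - (ψ (t ^ 2) + ψ (s ^ 2)) * ⟪a, b⟫ := by
    simp only [inner_sub_left, inner_sub_right, real_inner_smul_left,
      real_inner_self_eq_norm_sq, real_inner_comm b a, ← ht', ← hs']
    ring
  have hns : ‖a - b‖ ^ 2 = t ^ 2 + s ^ 2 - 2 * ⟪a, b⟫ := by
    have := @norm_sub_sq_real H _ _ a b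
    rw [this]; ring
  rw [hexp, hns]
  set c := ⟪a, b⟫ with hcdef
  have key : 0 ≤ (t * s - c) * ((t + s) * (ψ (t ^ 2) * t + ψ (s ^ 2) * s - mψ * (t + s)))
      + (t * s + c) * ((t - s) * (ψ (t ^ 2) * t - ψ (s ^ 2) * s) - mψ * (t - s) ^ 2) := by
    have h1 : (0:ℝ) ≤ t * s - c := by linarith
    have h2 : (0:ℝ) ≤ t * s + c := by linarith
    have h3 : (0:ℝ) ≤ (t + s) * (ψ (t ^ 2) * t + ψ (s ^ 2) * s - mψ * (t + s)) := by nlinarith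
    have h4 : (0:ℝ) ≤ (t - s) * (ψ (t ^ 2) * t - ψ (s ^ 2) * s) - mψ * (t - s) ^ 2 := by linarith
    have := mul_nonneg h1 h3
    have := mul_nonneg h2 h4
    linarith
  rcases eq_or_lt_of_le (mul_nonneg ht hs) with hts | hts
  · -- t * s = 0 : one of the vectors is zero-normed, hence c = 0
    have hc0 : c = 0 := le_antisymm (by linarith) (by linarith)
    have ec : (ψ (t ^ 2) + ψ (s ^ 2)) * c = 0 := by rw [hc0]; ring
    rcases mul_eq_zero.mp hts.symm with h0 | h0
    · have et : ψ (t ^ 2) * t ^ 2 = 0 := by rw [h0]; ring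
      have et2 : t ^ 2 = 0 := by rw [h0]; ring
      nlinarith [mul_nonneg (by linarith : (0:ℝ) ≤ ψ (s ^ 2) * s - mψ * s) hs]
    · have es : ψ (s ^ 2) * s ^ 2 = 0 := by rw [h0]; ring
      have es2 : s ^ 2 = 0 := by rw [h0]; ring
      nlinarith [mul_nonneg (by linarith : (0:ℝ) ≤ ψ (t ^ 2) * t - mψ * t) ht]
  · nlinarith [key, hts]
end

section
/- Let H be a real inner product space and ψ : [0, ∞) → ℝ satisfy the monotonicity bounds m_ψ(t − s) ≤ ψ(t²)t − ψ(s²)s ≤ M_ψ(t − s) for all t ≥ s ≥ 0, with constants M_ψ ≥ m_ψ > 0. Then for all b, δ ∈ H, ∫₀¹ ⟨ψ(‖b + sδ‖²)(b + sδ) − ψ(‖b‖²)b, δ⟩ ds ≤ (3/2)·M_ψ·‖δ‖². -/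
open Filter Topology
open scoped RealInnerProductSpace

private lemma key_aux
    {H : Type*} [NormedAddCommGroup H] [InnerProductSpace ℝ H]
    (ψ : ℝ → ℝ) (mψ Mψ : ℝ) (hm : 0 < mψ) (hmM : mψ ≤ Mψ)
    (hlow : ∀ s t : ℝ, 0 ≤ s → s ≤ t →
      mψ * (t - s) ≤ ψ (t ^ 2) * t - ψ (s ^ 2) * s)
    (hupp : ∀ s t : ℝ, 0 ≤ s → s ≤ t →
      ψ (t ^ 2) * t - ψ (s ^ 2) * s ≤ Mψ * (t - s))
    (a b : H) (hab : ‖b‖ ≤ ‖a‖) :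
    ‖ψ (‖a‖ ^ 2) • a - ψ (‖b‖ ^ 2) • b‖ ≤ 2 * Mψ * ‖a - b‖ := by
  rcases eq_or_lt_of_le (norm_nonneg a) with h0 | h0
  · have ha : a = 0 := norm_eq_zero.mp h0.symm
    have hb : b = 0 := by
      have : ‖b‖ ≤ 0 := by rw [← h0] at hab; exact hab
      exact norm_eq_zero.mp (le_antisymm this (norm_nonneg b))
    simp [ha, hb]
  · set t := ‖a‖ with ht
    set s := ‖b‖ with hs
    have hs0 : 0 ≤ s := norm_nonneg b
    have hψt_ub : ψ (t ^ 2) ≤ Mψ := by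
      have := hupp 0 t le_rfl (hs0.trans hab)
      have h2 : ψ (t ^ 2) * t ≤ Mψ * t := by nlinarith [this]
      exact le_of_mul_le_mul_right (by linarith) h0
    have hψt_lb : mψ ≤ ψ (t ^ 2) := by
      have := hlow 0 t le_rfl (hs0.trans hab)
      have h2 : mψ * t ≤ ψ (t ^ 2) * t := by nlinarith [this]
      exact le_of_mul_le_mul_right (by linarith) h0
    have hdiff : ψ (t ^ 2) • a - ψ (s ^ 2) • b
        = ψ (t ^ 2) • (a - b) + (ψ (t ^ 2) - ψ (s ^ 2)) • b := by
      rw [smul_sub, sub_smul]; abel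
    have hts : t - s ≤ ‖a - b‖ := by
      have := abs_norm_sub_norm_le a b
      rw [abs_le] at this; exact this.2
    have hts0 : 0 ≤ t - s := by linarith
    have hmid : |ψ (t ^ 2) * s - ψ (s ^ 2) * s| ≤ Mψ * (t - s) := by
      have h1 := hlow s t hs0 hab
      have h2 := hupp s t hs0 hab
      rw [abs_le]
      constructor <;> nlinarith
    have hsecond : |ψ (t ^ 2) - ψ (s ^ 2)| * s ≤ Mψ * (t - s) := by
      calc |ψ (t ^ 2) - ψ (s ^ 2)| * s = |(ψ (t ^ 2) - ψ (s ^ 2)) * s| := by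
            rw [abs_mul, abs_of_nonneg hs0]
        _ = |ψ (t ^ 2) * s - ψ (s ^ 2) * s| := by ring_nf
        _ ≤ Mψ * (t - s) := hmid
    calc ‖ψ (t ^ 2) • a - ψ (s ^ 2) • b‖
        ≤ ‖ψ (t ^ 2) • (a - b)‖ + ‖(ψ (t ^ 2) - ψ (s ^ 2)) • b‖ := by
          rw [hdiff]; exact norm_add_le _ _
      _ = |ψ (t ^ 2)| * ‖a - b‖ + |ψ (t ^ 2) - ψ (s ^ 2)| * s := by
          rw [norm_smul, norm_smul, Real.norm_eq_abs, Real.norm_eq_abs]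
      _ ≤ Mψ * ‖a - b‖ + Mψ * (t - s) := by
          have : |ψ (t ^ 2)| ≤ Mψ := by rw [abs_of_pos (lt_of_lt_of_le hm hψt_lb)]; exact hψt_ub
          have := mul_le_mul_of_nonneg_right this (norm_nonneg (a - b))
          linarith [hsecond]
      _ ≤ 2 * Mψ * ‖a - b‖ := by
          have hM : 0 ≤ Mψ := le_of_lt (lt_of_lt_of_le hm hmM)
          nlinarith [hts, norm_nonneg (a - b)]

private lemma key_lip
    {H : Type*} [NormedAddCommGroup H] [InnerProductSpace ℝ H]
    (ψ : ℝ → ℝ) (mψ Mψ : ℝ) (hm : 0 < mψ) (hmM : mψ ≤ Mψ)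
    (hlow : ∀ s t : ℝ, 0 ≤ s → s ≤ t →
      mψ * (t - s) ≤ ψ (t ^ 2) * t - ψ (s ^ 2) * s)
    (hupp : ∀ s t : ℝ, 0 ≤ s → s ≤ t →
      ψ (t ^ 2) * t - ψ (s ^ 2) * s ≤ Mψ * (t - s))
    (a b : H) :
    ‖ψ (‖a‖ ^ 2) • a - ψ (‖b‖ ^ 2) • b‖ ≤ 2 * Mψ * ‖a - b‖ := by
  rcases le_total ‖b‖ ‖a‖ with h | h
  · exact key_aux ψ mψ Mψ hm hmM hlow hupp a b h
  · have := key_aux ψ mψ Mψ hm hmM hlow hupp b a h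
    rwa [← norm_neg (ψ (‖b‖^2) • b - ψ (‖a‖^2) • a), neg_sub, ← norm_neg (b - a), neg_sub] at this

/-- The integral estimate from the proof of Lemma 3.9 (lem:Tdiffusion): if `ψ`
satisfies `m_ψ(t − s) ≤ ψ(t²)t − ψ(s²)s ≤ M_ψ(t − s)` for all `t ≥ s ≥ 0`,
then for all `b, δ ∈ H`,
`∫₀¹ ⟨ψ(‖b + sδ‖²)(b + sδ) − ψ(‖b‖²)b, δ⟩ ds ≤ (3/2)M_ψ‖δ‖²`. -/
theorem statement19
    {H : Type*} [NormedAddCommGroup H] [InnerProductSpace ℝ H]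
    (ψ : ℝ → ℝ) (mψ Mψ : ℝ) (hm : 0 < mψ) (hmM : mψ ≤ Mψ)
    (hlow : ∀ s t : ℝ, 0 ≤ s → s ≤ t →
      mψ * (t - s) ≤ ψ (t ^ 2) * t - ψ (s ^ 2) * s)
    (hupp : ∀ s t : ℝ, 0 ≤ s → s ≤ t →
      ψ (t ^ 2) * t - ψ (s ^ 2) * s ≤ Mψ * (t - s)) :
    ∀ b δ : H,
      (∫ s in (0:ℝ)..1,
          ⟪ψ (‖b + s • δ‖ ^ 2) • (b + s • δ) - ψ (‖b‖ ^ 2) • b, δ⟫)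
        ≤ 3 / 2 * Mψ * ‖δ‖ ^ 2 := by
  intro b δ
  have hM : 0 < Mψ := lt_of_lt_of_le hm hmM
  set φ : H → H := fun x => ψ (‖x‖ ^ 2) • x with hφ
  have hlip : LipschitzWith (⟨2 * Mψ, by positivity⟩ : NNReal) φ :=
    LipschitzWith.of_dist_le_mul fun x y => by
      simp only [dist_eq_norm, hφ]
      exact key_lip ψ mψ Mψ hm hmM hlow hupp x y
  have hcont : Continuous fun s : ℝ => ⟪φ (b + s • δ) - φ b, δ⟫ := by
    apply Continuous.inner
    · exact (hlip.continuous.comp (by continuity)).sub continuous_const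
    · exact continuous_const
  have hptw : ∀ s ∈ Set.Icc (0:ℝ) 1,
      ⟪ψ (‖b + s • δ‖ ^ 2) • (b + s • δ) - ψ (‖b‖ ^ 2) • b, δ⟫
        ≤ 2 * Mψ * s * ‖δ‖ ^ 2 := by
    intro s hsmem
    calc ⟪ψ (‖b + s • δ‖ ^ 2) • (b + s • δ) - ψ (‖b‖ ^ 2) • b, δ⟫
        ≤ ‖ψ (‖b + s • δ‖ ^ 2) • (b + s • δ) - ψ (‖b‖ ^ 2) • b‖ * ‖δ‖ :=
          real_inner_le_norm _ _
      _ ≤ (2 * Mψ * ‖(b + s • δ) - b‖) * ‖δ‖ := by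
          gcongr
          exact key_lip ψ mψ Mψ hm hmM hlow hupp _ _
      _ = 2 * Mψ * s * ‖δ‖ ^ 2 := by
          rw [add_sub_cancel_left, norm_smul, Real.norm_eq_abs, abs_of_nonneg hsmem.1]
          ring
  calc (∫ s in (0:ℝ)..1, ⟪ψ (‖b + s • δ‖ ^ 2) • (b + s • δ) - ψ (‖b‖ ^ 2) • b, δ⟫)
      ≤ ∫ s in (0:ℝ)..1, 2 * Mψ * s * ‖δ‖ ^ 2 := by
        apply intervalIntegral.integral_mono_on (by norm_num)
        · exact (hcont.intervalIntegrable 0 1)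
        · exact (by continuity : Continuous fun s : ℝ => 2 * Mψ * s * ‖δ‖ ^ 2).intervalIntegrable 0 1
        · exact hptw
    _ = Mψ * ‖δ‖ ^ 2 := by
        have : (∫ s in (0:ℝ)..1, 2 * Mψ * s * ‖δ‖ ^ 2)
            = (2 * Mψ * ‖δ‖ ^ 2) * ∫ s in (0:ℝ)..1, s := by
          rw [← intervalIntegral.integral_const_mul]
          congr 1; ext s; ring
        rw [this, integral_id]; ring
    _ ≤ 3 / 2 * Mψ * ‖δ‖ ^ 2 := by nlinarith [sq_nonneg ‖δ‖]
end
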